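/- Let Ω ⊂ ℤ_d with |Ω| = L. Then the following are equivalent: (i) for every circular convolution operator A ∈ 𝒜_L, the family Y = {e_i, A e_i, …, A^{N_A−1} e_i : i ∈ Ω} is a frame for ℓ²(ℤ_d); (ii) the L×d submatrix (F_d)_Ω of F_d formed by the rows indexed by Ω is full spark. -/
import Mathlib


open Matrix

/-- Unnormalized discrete Fourier transform of `a : ZMod d → ℂ`. -/
noncomputable def hatKer (d : ℕ) [NeZero d] (a : ZMod d → ℂ) : ZMod d → ℂ :=
  fun j => ∑ k : ZMod d,
    a k * Complex.exp (-(2 * (Real.pi : ℂ) * Complex.I) * ((j.val : ℂ) * (k.val : ℂ)) / (d : ℂ))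

/-- The circular convolution operator with kernel `a`, as a matrix. -/
def convMat (d : ℕ) (a : ZMod d → ℂ) : Matrix (ZMod d) (ZMod d) ℂ :=
  Matrix.of fun k i => a (k - i)

/-- The normalized discrete Fourier matrix `F_d`. -/
noncomputable def FdMat (d : ℕ) : Matrix (ZMod d) (ZMod d) ℂ :=
  Matrix.of fun j k =>
    ((Real.sqrt d : ℝ) : ℂ)⁻¹ *
      Complex.exp (-(2 * (Real.pi : ℂ) * Complex.I) * ((j.val : ℂ) * (k.val : ℂ)) / (d : ℂ))

/-- The largest geometric multiplicity of an eigenvalue of `diag b`, i.e. the size of the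
largest level set of `b`. -/
noncomputable def maxMult (d : ℕ) [NeZero d] (b : ZMod d → ℂ) : ℕ :=
  Finset.univ.sup fun j : ZMod d => Nat.card {t : ZMod d | b t = b j}

/-- The number of distinct eigenvalues of `diag b`. -/
noncomputable def numEig (d : ℕ) [NeZero d] (b : ZMod d → ℂ) : ℕ :=
  Nat.card (Set.range b)

/-- A matrix `M : Matrix ι κ ℂ` (with `#ι ≤ #κ`) is full spark when every choice of `#ι`
columns is linearly independent, i.e. every maximal square submatrix is invertible. -/
def FullSpark {ι κ : Type*} [Fintype ι] [Fintype κ] (M : Matrix ι κ ℂ) : Prop :=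
  ∀ S : Finset κ, S.card = Fintype.card ι →
    LinearIndependent ℂ (fun k : S => fun i : ι => M i (k : κ))

/-! ### Auxiliary lemmas -/

section Aux

variable (d : ℕ) [NeZero d]

lemma expChar_eq (j k : ZMod d) :
    Complex.exp (-(2 * (Real.pi : ℂ) * Complex.I) * ((j.val : ℂ) * (k.val : ℂ)) / (d : ℂ))
      = ZMod.stdAddChar (-(j*k)) := by
  have h : (-(j*k) : ZMod d) = ((-(j.val * k.val : ℕ) : ℤ) : ZMod d) := by
    push_cast [ZMod.natCast_zmod_val]
    ring
  rw [h, ZMod.stdAddChar_coe]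
  congr 1
  push_cast
  ring

lemma FdMat_apply' (j k : ZMod d) :
    FdMat d j k = ((Real.sqrt d : ℝ) : ℂ)⁻¹ * ZMod.stdAddChar (-(j*k)) := by
  rw [FdMat, Matrix.of_apply, expChar_eq]

lemma FdMat_symm (j k : ZMod d) : FdMat d j k = FdMat d k j := by
  rw [FdMat_apply', FdMat_apply', mul_comm j k]

lemma hatKer_eq_dft (a : ZMod d → ℂ) : hatKer d a = ZMod.dft a := by
  funext j
  rw [hatKer, ZMod.dft_apply]
  refine Finset.sum_congr rfl fun k _ => ?_
  rw [expChar_eq, smul_eq_mul, mul_comm, mul_comm k j]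

lemma sqrtc_ne_zero : ((Real.sqrt d : ℝ) : ℂ)⁻¹ ≠ 0 := by
  apply inv_ne_zero
  rw [Complex.ofReal_ne_zero]
  rw [Real.sqrt_ne_zero']
  exact_mod_cast Nat.pos_of_ne_zero (NeZero.ne d)

lemma FdMat_mul_convMat (a : ZMod d → ℂ) :
    FdMat d * convMat d a = Matrix.diagonal (hatKer d a) * FdMat d := by
  ext j i
  rw [Matrix.mul_apply, Matrix.diagonal_mul]
  have key : ∀ m : ZMod d, FdMat d j (m + i) = ZMod.stdAddChar (-(j*m)) * FdMat d j i := by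
    intro m
    rw [FdMat_apply', FdMat_apply']
    rw [mul_add, neg_add, AddChar.map_add_eq_mul]
    ring
  calc ∑ k, FdMat d j k * convMat d a k i
      = ∑ m, FdMat d j (m + i) * convMat d a (m + i) i := by
        exact (Fintype.sum_equiv (Equiv.addRight i) _ _ fun m => rfl).symm
    _ = ∑ m, (a m * ZMod.stdAddChar (-(j*m))) * FdMat d j i := by
        refine Finset.sum_congr rfl fun m _ => ?_
        rw [key m]
        have : convMat d a (m + i) i = a m := by simp [convMat]
        rw [this]; ring
    _ = hatKer d a j * FdMat d j i := by
        rw [← Finset.sum_mul]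
        congr 1
        rw [hatKer]
        refine Finset.sum_congr rfl fun m _ => ?_
        rw [expChar_eq]

lemma FdMat_mul_convMat_pow (a : ZMod d → ℂ) (n : ℕ) :
    FdMat d * (convMat d a) ^ n = (Matrix.diagonal (hatKer d a)) ^ n * FdMat d := by
  induction n with
  | zero => simp
  | succ n ih =>
    rw [pow_succ, ← mul_assoc, ih, mul_assoc, FdMat_mul_convMat, ← mul_assoc, ← pow_succ]

lemma FdMat_mulVecLin (v : ZMod d → ℂ) :
    (FdMat d).mulVecLin v = ((Real.sqrt d : ℝ) : ℂ)⁻¹ • ZMod.dft v := by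
  funext j
  rw [Matrix.mulVecLin_apply, Pi.smul_apply, ZMod.dft_apply, Finset.smul_sum,
    Matrix.mulVec, dotProduct]
  refine Finset.sum_congr rfl fun k _ => ?_
  show FdMat d j k * v k = _
  rw [FdMat_apply', smul_eq_mul, smul_eq_mul, mul_comm k j]
  ring

lemma FdMat_bijective : Function.Bijective (FdMat d).mulVecLin := by
  constructor
  · intro v w hvw
    rw [FdMat_mulVecLin, FdMat_mulVecLin] at hvw
    exact (ZMod.dft (N := d)).injective
      (smul_right_injective (ZMod d → ℂ) (sqrtc_ne_zero d) hvw)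
  · intro y
    refine ⟨(ZMod.dft (N := d)).symm (((Real.sqrt d : ℝ) : ℂ) • y), ?_⟩
    rw [FdMat_mulVecLin, LinearEquiv.apply_symm_apply, smul_smul]
    have hc : ((Real.sqrt d : ℝ) : ℂ) ≠ 0 := by
      rw [Complex.ofReal_ne_zero, Real.sqrt_ne_zero']
      exact_mod_cast Nat.pos_of_ne_zero (NeZero.ne d)
    rw [inv_mul_cancel₀ hc, one_smul]

lemma span_transfer (a : ZMod d → ℂ) (N : ℕ) (Ω : Finset (ZMod d)) :
    (Submodule.span ℂ {v : ZMod d → ℂ | ∃ i ∈ Ω, ∃ n < N,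
        v = (convMat d a) ^ n *ᵥ (Pi.single i 1 : ZMod d → ℂ)} = ⊤)
    ↔ (Submodule.span ℂ {v : ZMod d → ℂ | ∃ i ∈ Ω, ∃ n < N,
        v = fun j => hatKer d a j ^ n * FdMat d j i} = ⊤) := by
  set f := (FdMat d).mulVecLin
  have hf := FdMat_bijective d
  have hcalc : ∀ (i : ZMod d) (n : ℕ),
      f ((convMat d a) ^ n *ᵥ (Pi.single i 1 : ZMod d → ℂ))
        = fun j => hatKer d a j ^ n * FdMat d j i := by
    intro i n
    show FdMat d *ᵥ _ = _
    rw [Matrix.mulVec_mulVec, FdMat_mul_convMat_pow, ← Matrix.mulVec_mulVec,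
      Matrix.mulVec_single, Matrix.diagonal_pow]
    funext j
    rw [Matrix.mulVec_diagonal]
    simp [mul_comm]
  have himg : f '' {v : ZMod d → ℂ | ∃ i ∈ Ω, ∃ n < N,
        v = (convMat d a) ^ n *ᵥ (Pi.single i 1 : ZMod d → ℂ)}
      = {v : ZMod d → ℂ | ∃ i ∈ Ω, ∃ n < N,
        v = fun j => hatKer d a j ^ n * FdMat d j i} := by
    ext v
    constructor
    · rintro ⟨w, ⟨i, hi, n, hn, rfl⟩, rfl⟩
      exact ⟨i, hi, n, hn, (hcalc i n)⟩
    · rintro ⟨i, hi, n, hn, rfl⟩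
      exact ⟨(convMat d a) ^ n *ᵥ (Pi.single i 1 : ZMod d → ℂ),
        ⟨i, hi, n, hn, rfl⟩, hcalc i n⟩
  constructor
  · intro h
    rw [← himg, Submodule.span_image, h, Submodule.map_top, LinearMap.range_eq_top]
    exact hf.surjective
  · intro h
    rw [← himg, Submodule.span_image] at h
    have h2 : Submodule.map f ⊤ = ⊤ := by
      rw [Submodule.map_top, LinearMap.range_eq_top]; exact hf.surjective
    exact Submodule.map_injective_of_injective hf.injective (h.trans h2.symm)

lemma proj_mem_span (b u : ZMod d → ℂ) (t : ZMod d) [∀ s, Decidable (b s = b t)] :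
    (fun s => if b s = b t then u s else 0) ∈
      Submodule.span ℂ {v : ZMod d → ℂ | ∃ n < Nat.card (Set.range b),
        v = fun j => b j ^ n * u j} := by
  classical
  set Rb := (Set.finite_range b).toFinset with hRb
  have hmem : b t ∈ Rb := by simp [hRb]
  set E := Rb.erase (b t) with hEdef
  set N := Nat.card (Set.range b) with hNdef
  have hNR : Rb.card = N := by
    rw [hNdef, Nat.card_coe_set_eq, Set.ncard_eq_toFinset_card']
    simp [hRb]
  have hN1 : 1 ≤ N := by
    rw [← hNR]
    exact Finset.card_pos.2 ⟨b t, hmem⟩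
  have hE : E.card = N - 1 := by rw [hEdef, Finset.card_erase_of_mem hmem, hNR]
  set p : Polynomial ℂ :=
    ∏ μ ∈ E, (Polynomial.C ((b t - μ)⁻¹) * (Polynomial.X - Polynomial.C μ)) with hp
  have hdeg : p.natDegree < N := by
    have h1 : p.natDegree ≤ ∑ μ ∈ E,
        (Polynomial.C ((b t - μ)⁻¹) * (Polynomial.X - Polynomial.C μ)).natDegree :=
      Polynomial.natDegree_prod_le _ _
    have h2 : ∀ μ ∈ E,
        (Polynomial.C ((b t - μ)⁻¹) * (Polynomial.X - Polynomial.C μ)).natDegree ≤ 1 := by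
      intro μ _
      refine le_trans (Polynomial.natDegree_C_mul_le _ _) ?_
      rw [Polynomial.natDegree_X_sub_C]
    have h3 : p.natDegree ≤ E.card := by
      calc p.natDegree ≤ _ := h1
        _ ≤ ∑ _μ ∈ E, 1 := Finset.sum_le_sum h2
        _ = E.card := by simp
    calc p.natDegree ≤ N - 1 := hE ▸ h3
      _ < N := Nat.sub_lt hN1 one_pos
  have heval : ∀ s, p.eval (b s) = if b s = b t then 1 else 0 := by
    intro s
    rw [hp, Polynomial.eval_prod]
    simp only [Polynomial.eval_mul, Polynomial.eval_C, Polynomial.eval_sub, Polynomial.eval_X]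
    split_ifs with h
    · rw [h]
      refine Finset.prod_eq_one fun μ hμ => ?_
      exact inv_mul_cancel₀ (sub_ne_zero_of_ne (Ne.symm (Finset.ne_of_mem_erase hμ)))
    · refine Finset.prod_eq_zero (i := b s) ?_ (by rw [sub_self, mul_zero])
      rw [hEdef, Finset.mem_erase]
      exact ⟨h, by simp [hRb]⟩
  have hfun : (fun s => if b s = b t then u s else 0)
      = ∑ n ∈ Finset.range N, p.coeff n • (fun j => b j ^ n * u j) := by
    funext s
    rw [Finset.sum_apply]
    simp only [Pi.smul_apply, smul_eq_mul]
    have hev := Polynomial.eval_eq_sum_range' hdeg (b s)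
    calc (if b s = b t then u s else 0) = p.eval (b s) * u s := by
          rw [heval]; split_ifs <;> simp
      _ = ∑ n ∈ Finset.range N, p.coeff n * (b s ^ n * u s) := by
          rw [hev, Finset.sum_mul]
          exact Finset.sum_congr rfl fun n _ => by ring
  rw [hfun]
  refine Submodule.sum_mem _ fun n hn => Submodule.smul_mem _ _ ?_
  exact Submodule.subset_span ⟨n, Finset.mem_range.1 hn, rfl⟩

end Aux

/-- for `Ω ⊂ ℤ_d` with `|Ω| = L`, the family
`Y = {A^n e_i : i ∈ Ω, n ≤ N_A - 1}` is a frame for every circular convolution operator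
`A ∈ 𝒜_L` iff the row submatrix `(F_d)_Ω` is full spark. -/
theorem stmt4 (d : ℕ) [NeZero d] (L : ℕ) (Ω : Finset (ZMod d)) (hΩ : Ω.card = L) :
    (∀ a : ZMod d → ℂ, maxMult d (hatKer d a) = L →
      Submodule.span ℂ {v : ZMod d → ℂ | ∃ i ∈ Ω, ∃ n < numEig d (hatKer d a),
          v = (convMat d a) ^ n *ᵥ (Pi.single i 1 : ZMod d → ℂ)} = ⊤)
    ↔ FullSpark (Matrix.of fun (r : ↥Ω) (k : ZMod d) => FdMat d r.1 k) := by
  classical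
  have hΩcard : Fintype.card ↥Ω = L := by rw [Fintype.card_coe, hΩ]
  constructor
  · -- frames ⇒ full spark
    intro hfr S hS
    rw [hΩcard] at hS
    rcases Nat.eq_zero_or_pos L with hL0 | hLpos
    · have hSe : S = ∅ := Finset.card_eq_zero.1 (by rw [hS, hL0])
      subst hSe
      haveI : IsEmpty (↥(∅ : Finset (ZMod d))) := by
        simp only [Finset.isEmpty_coe_sort]
      exact linearIndependent_empty_type
    · set b : ZMod d → ℂ := fun s => if s ∈ S then 0 else ((s.val : ℂ) + 1) with hb
      have hbne : ∀ s : ZMod d, ((s.val : ℂ) + 1) ≠ 0 := by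
        intro s h
        have h2 : ((s.val + 1 : ℕ) : ℂ) = 0 := by push_cast; linear_combination h
        exact Nat.succ_ne_zero s.val (by exact_mod_cast h2)
      have hlev0 : ∀ s, b s = 0 ↔ s ∈ S := by
        intro s
        constructor
        · intro h
          by_contra hs
          rw [hb] at h
          simp only [if_neg hs] at h
          exact hbne s h
        · intro h; rw [hb]; simp [h]
      have hlevS : ∀ j ∈ S, {t : ZMod d | b t = b j} = ↑S := by
        intro j hj
        have hbj : b j = 0 := (hlev0 j).2 hj
        ext s
        simp only [Set.mem_setOf_eq, hbj, Finset.coe_sort_coe, Finset.mem_coe]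
        exact hlev0 s
      have hlev1 : ∀ j ∉ S, {t : ZMod d | b t = b j} = {j} := by
        intro j hj
        have hbj : b j = (j.val : ℂ) + 1 := by rw [hb]; simp [hj]
        ext s
        simp only [Set.mem_setOf_eq, Set.mem_singleton_iff]
        constructor
        · intro h
          by_cases hs : s ∈ S
          · exfalso
            rw [(hlev0 s).2 hs] at h
            exact hbne j (hbj ▸ h.symm)
          · rw [hbj, hb] at h
            simp only [if_neg hs] at h
            have : (s.val : ℂ) = (j.val : ℂ) := by linear_combination h
            exact ZMod.val_injective d (by exact_mod_cast this)
        · rintro rfl; rfl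
      set a := (ZMod.dft (N := d)).symm b with ha
      have hba : hatKer d a = b := by
        rw [hatKer_eq_dft, ha, LinearEquiv.apply_symm_apply]
      have hmax : maxMult d (hatKer d a) = L := by
        rw [hba, maxMult]
        apply le_antisymm
        · refine Finset.sup_le fun j _ => ?_
          by_cases hj : j ∈ S
          · rw [hlevS j hj, Nat.card_coe_set_eq, Set.ncard_coe_finset, hS]
          · rw [hlev1 j hj, Nat.card_coe_set_eq, Set.ncard_singleton]
            exact hLpos
        · obtain ⟨j0, hj0⟩ := Finset.card_pos.1 (by rw [hS]; exact hLpos)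
          refine le_trans ?_ (Finset.le_sup (Finset.mem_univ j0))
          rw [hlevS j0 hj0, Nat.card_coe_set_eq, Set.ncard_coe_finset, hS]
      have hsp := (span_transfer d a (numEig d (hatKer d a)) Ω).1 (hfr a hmax)
      set π : (ZMod d → ℂ) →ₗ[ℂ] (↥S → ℂ) := LinearMap.funLeft ℂ ℂ Subtype.val with hπ
      have hπsurj : Function.Surjective π :=
        LinearMap.funLeft_surjective_of_injective ℂ ℂ _ Subtype.val_injective
      have hmap : Submodule.span ℂ (π '' {v : ZMod d → ℂ | ∃ i ∈ Ω,
          ∃ n < numEig d (hatKer d a), v = fun j => hatKer d a j ^ n * FdMat d j i}) = ⊤ := by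
        rw [Submodule.span_image, hsp, Submodule.map_top, LinearMap.range_eq_top]
        exact hπsurj
      have hsub : π '' {v : ZMod d → ℂ | ∃ i ∈ Ω,
            ∃ n < numEig d (hatKer d a), v = fun j => hatKer d a j ^ n * FdMat d j i}
          ⊆ insert 0 (Set.range (fun i : ↥Ω => fun s : ↥S => FdMat d s.1 i.1)) := by
        rintro _ ⟨v, ⟨i, hi, n, hn, rfl⟩, rfl⟩
        rcases Nat.eq_zero_or_pos n with h0 | hpos
        · subst h0
          refine Set.mem_insert_iff.2 (Or.inr ⟨⟨i, hi⟩, ?_⟩)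
          funext s
          show FdMat d s.1 i = hatKer d a s.1 ^ 0 * FdMat d s.1 i
          rw [pow_zero, one_mul]
        · refine Set.mem_insert_iff.2 (Or.inl ?_)
          funext s
          show hatKer d a s.1 ^ n * FdMat d s.1 i = 0
          rw [hba, (hlev0 s.1).2 s.2, zero_pow hpos.ne', zero_mul]
      have htop : Submodule.span ℂ
          (Set.range (fun i : ↥Ω => fun s : ↥S => FdMat d s.1 i.1)) = ⊤ := by
        apply le_antisymm le_top
        calc (⊤ : Submodule ℂ (↥S → ℂ)) = _ := hmap.symm
          _ ≤ Submodule.span ℂ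
              (insert 0 (Set.range (fun i : ↥Ω => fun s : ↥S => FdMat d s.1 i.1))) :=
            Submodule.span_mono hsub
          _ = _ := Submodule.span_insert_zero
      have hli : LinearIndependent ℂ (fun i : ↥Ω => fun s : ↥S => FdMat d s.1 i.1) := by
        apply linearIndependent_of_top_le_span_of_card_eq_finrank (le_of_eq htop.symm)
        rw [hΩcard, Module.finrank_pi, Fintype.card_coe, hS]
      set ε : ↥S ≃ ↥Ω := Fintype.equivOfCardEq (by rw [Fintype.card_coe, hS, hΩcard]) with hε
      set R : Matrix ↥S ↥S ℂ := fun s s' => FdMat d s.1 (ε s').1 with hR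
      have hcols : LinearIndependent ℂ (fun s' : ↥S => Rᵀ s') := hli.comp ε ε.injective
      have hrows : LinearIndependent ℂ (fun s : ↥S => R s) :=
        Matrix.linearIndependent_rows_iff_isUnit.2
          (Matrix.linearIndependent_cols_iff_isUnit.1 hcols)
      have hfinal : LinearIndependent ℂ
          (fun k : ↥S => (LinearMap.funLeft ℂ ℂ ε.symm) (R k)) :=
        hrows.map' _ (LinearMap.ker_eq_bot.2
          (LinearMap.funLeft_injective_of_surjective ℂ ℂ _ ε.symm.surjective))
      have heq : (fun k : ↥S => fun i : ↥Ω =>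
            (Matrix.of fun (r : ↥Ω) (k : ZMod d) => FdMat d r.1 k) i (k : ZMod d))
          = fun k : ↥S => (LinearMap.funLeft ℂ ℂ ε.symm) (R k) := by
        funext k i
        show FdMat d i.1 k.1 = R k (ε.symm i)
        rw [hR]
        simp only [Equiv.apply_symm_apply]
        exact FdMat_symm d i.1 k.1
      rw [heq]
      exact hfinal
  · -- full spark ⇒ frames
    intro hFS a hmax
    rw [span_transfer d a (numEig d (hatKer d a)) Ω]
    set b := hatKer d a with hb
    rw [Submodule.eq_top_iff']
    intro x
    have hsingle : ∀ t : ZMod d, (Pi.single t 1 : ZMod d → ℂ) ∈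
        Submodule.span ℂ {v : ZMod d → ℂ | ∃ i ∈ Ω, ∃ n < numEig d b,
          v = fun j => b j ^ n * FdMat d j i} := by
      intro t
      set Tf : Finset (ZMod d) := Finset.filter (fun s => b s = b t) Finset.univ with hTf
      have hTcard : Tf.card ≤ L := by
        have h1 : Nat.card {s : ZMod d | b s = b t} ≤ L :=
          le_trans (Finset.le_sup (f := fun j : ZMod d => Nat.card {s : ZMod d | b s = b j})
            (Finset.mem_univ t)) (le_of_eq hmax)
        rw [Nat.card_coe_set_eq] at h1
        have hset : {s : ZMod d | b s = b t} = ↑Tf := by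
          ext s; simp [hTf]
        rwa [hset, Set.ncard_coe_finset] at h1
      obtain ⟨S, hTS, hScard⟩ := Finset.exists_superset_card_eq hTcard
        (by rw [← hΩ]; exact Finset.card_le_univ Ω)
      have hli := hFS S (by rw [hScard, hΩcard])
      set ε : ↥Ω ≃ ↥S := Fintype.equivOfCardEq
        (by rw [Fintype.card_coe, Fintype.card_coe, hΩ, hScard]) with hε
      set Q : Matrix ↥Ω ↥Ω ℂ := fun p i => FdMat d i.1 (ε p).1 with hQ
      have hQrows : LinearIndependent ℂ (fun p : ↥Ω => Q p) := hli.comp ε ε.injective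
      have hQunit : IsUnit Q := Matrix.linearIndependent_rows_iff_isUnit.1 hQrows
      obtain ⟨w, hw⟩ := (Matrix.mulVec_surjective_iff_isUnit.2 hQunit)
        (fun p => if (ε p).1 = t then 1 else 0)
      have hkey : (Pi.single t 1 : ZMod d → ℂ)
          = ∑ i : ↥Ω, w i • (fun s' => if b s' = b t then FdMat d s' i.1 else 0) := by
        funext s'
        rw [Finset.sum_apply]
        simp only [Pi.smul_apply, smul_eq_mul]
        by_cases hbs : b s' = b t
        · simp only [if_pos hbs]
          have hsS : s' ∈ S := hTS (by simp [hTf, hbs])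
          have hww := congrFun hw (ε.symm ⟨s', hsS⟩)
          rw [Matrix.mulVec, dotProduct] at hww
          simp only [hQ, Equiv.apply_symm_apply] at hww
          rw [Pi.single_apply, ← hww]
          refine Finset.sum_congr rfl fun i _ => ?_
          rw [FdMat_symm d s' i.1]
          ring
        · simp only [if_neg hbs, mul_zero, Finset.sum_const_zero, Pi.single_apply]
          rw [if_neg]
          rintro rfl
          exact hbs rfl
      rw [hkey]
      refine Submodule.sum_mem _ fun i _ => Submodule.smul_mem _ _ ?_
      have hmem := proj_mem_span d b (fun j => FdMat d j i.1) t
      refine Submodule.span_mono ?_ hmem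
      rintro v ⟨n, hn, rfl⟩
      exact ⟨i.1, i.2, n, hn, rfl⟩
    have hx : x = ∑ t : ZMod d, x t • (Pi.single t 1 : ZMod d → ℂ) := by
      funext j
      rw [Finset.sum_apply]
      simp [Pi.single_apply]
    rw [hx]
    exact Submodule.sum_mem _ fun t _ => Submodule.smul_mem _ _ (hsingle t)
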